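/- Under the standing assumptions on (Ω,Σ,μ), V, q, A, f and K, the solution operator S : V* → V of the variational inequality (VI): y ∈ K, ⟨Ay + f(y) − u, v − y⟩_V ≥ 0 for all v ∈ K, is pointwise-a.e. convex: for all u₁, u₂ ∈ V* and all λ ∈ [0,1], S(λu₁ + (1−λ)u₂) ≤ λS(u₁) + (1−λ)S(u₂) holds μ-almost everywhere in Ω. -/

import Mathlib

open Filter Topology MeasureTheory ENNReal NNReal

noncomputable section

/-- The standing assumptions of Section 3 of the paper (Assumption 3.1, items (ii) and
(iv)–(vi)): a real separable Hilbert space `V` embedded (injectively, continuously, compactly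
and densely) into `L^q(μ)` via `ι` and closed under pointwise-a.e. truncations (realized by
the map `trunc`), an elliptic operator `A : V → V*` compatible with truncations, a
nondecreasing, globally Lipschitz continuous, concave function `f : ℝ → ℝ` (acting via its
Nemytskii operator), and a nonempty closed convex set `K ⊆ V` stable under the lattice-type
operations `v ↦ v + max(0,z)` and `(v₁, v₂) ↦ min(v₁, v₂)`.  The dual `V*` is realized as
`V →L[ℝ] ℝ`, and truncations `[v]_{a₁}^{a₂} = min(a₂, max(a₁, v))` (with extended-real
bounds `a₁ ≤ 0 ≤ a₂`) act μ-a.e. through the embedding `ι`.  In particular,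
`trunc 0 ⊤ z` realizes `max(0, z)` and `v₁ - trunc 0 ⊤ (v₁ - v₂)` realizes `min(v₁, v₂)`. -/
structure VISetting (Ω : Type*) [MeasurableSpace Ω] (μ : Measure Ω) (q : ℝ≥0∞) [Fact (1 ≤ q)]
    (V : Type*) [NormedAddCommGroup V] [InnerProductSpace ℝ V] [CompleteSpace V] where
  ι : V →L[ℝ] Lp ℝ q μ
  ι_inj : Function.Injective ι
  ι_cpt : IsCompactOperator ι
  ι_dense : DenseRange ι
  trunc : EReal → EReal → V → V
  trunc_spec : ∀ a₁ a₂ : EReal, a₁ ≤ 0 → 0 ≤ a₂ → ∀ v : V,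
    (ι (trunc a₁ a₂ v) : Ω → ℝ) =ᵐ[μ]
      fun ω => (min a₂ (max a₁ (((ι v : Ω → ℝ) ω : ℝ) : EReal))).toReal
  A : V →L[ℝ] V →L[ℝ] ℝ
  c : ℝ
  c_pos : 0 < c
  coercive : ∀ v : V, c * ‖v‖ ^ 2 ≤ A v v
  maxprop : ∀ a₁ a₂ : EReal, a₁ ≤ 0 → 0 ≤ a₂ → ∀ v : V,
    A (trunc a₁ a₂ v) (trunc a₁ a₂ v) ≤ min (A v (trunc a₁ a₂ v)) (A (trunc a₁ a₂ v) v)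
  f : ℝ → ℝ
  f_mono : Monotone f
  f_lip : ∃ L : ℝ≥0, LipschitzWith L f
  f_concave : ConcaveOn ℝ Set.univ f
  K : Set V
  K_nonempty : K.Nonempty
  K_closed : IsClosed K
  K_convex : Convex ℝ K
  K_plus_max : ∀ v ∈ K, ∀ z : V, v + trunc 0 ⊤ z ∈ K
  K_min : ∀ v₁ ∈ K, ∀ v₂ ∈ K, v₁ - trunc 0 ⊤ (v₁ - v₂) ∈ K

variable {Ω : Type*} [MeasurableSpace Ω] {μ : Measure Ω} {q : ℝ≥0∞} [Fact (1 ≤ q)]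
  {V : Type*} [NormedAddCommGroup V] [InnerProductSpace ℝ V] [CompleteSpace V]

/-- `y` solves the variational inequality (VI):
`y ∈ K`, `⟨Ay + f(y) - u, v - y⟩_V ≥ 0` for all `v ∈ K`, where `f` acts as a Nemytskii
operator through the embedding `ι`. -/
def VISetting.IsSol (E : VISetting Ω μ q V) (u : V →L[ℝ] ℝ) (y : V) : Prop :=
  y ∈ E.K ∧ ∀ v ∈ E.K,
    0 ≤ E.A y (v - y) + (∫ ω, E.f ((E.ι y : Ω → ℝ) ω) * (E.ι (v - y) : Ω → ℝ) ω ∂μ)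
      - u (v - y)


private lemma integrable_mul_of_memL2 {Ω : Type*} [MeasurableSpace Ω] {μ : Measure Ω}
    {f g : Ω → ℝ} (hf : MemLp f 2 μ) (hg : MemLp g 2 μ) :
    Integrable (fun ω => f ω * g ω) μ := by
  have h := L2.integrable_inner (𝕜 := ℝ) (hf.toLp f) (hg.toLp g)
  refine (integrable_congr ?_).mp h
  filter_upwards [hf.coeFn_toLp, hg.coeFn_toLp] with ω h1 h2
  simp [h1, h2, RCLike.inner_apply, mul_comm]

set_option maxHeartbeats 1000000 in
/-- Under the standing assumptions, the solution map of the variational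
inequality (VI) is pointwise-a.e. convex: whenever `y₁`, `y₂`, `y₁₂` solve (VI) with
right-hand sides `u₁`, `u₂`, `λu₁ + (1-λ)u₂`, respectively, one has
`y₁₂ ≤ λ y₁ + (1-λ) y₂` μ-a.e. in `Ω`. -/
theorem vi_solution_map_ptwise_ae_convex
    (μ : Measure Ω) (hμc : μ.IsComplete) [IsFiniteMeasure μ]
    (hq : 2 ≤ q) [TopologicalSpace.SeparableSpace V]
    (E : VISetting Ω μ q V) :
    ∀ (u₁ u₂ : V →L[ℝ] ℝ) (l : ℝ), 0 ≤ l → l ≤ 1 →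
      ∀ y₁ y₂ y₁₂ : V,
        E.IsSol u₁ y₁ → E.IsSol u₂ y₂ → E.IsSol (l • u₁ + (1 - l) • u₂) y₁₂ →
        ∀ᵐ ω ∂μ, (E.ι y₁₂ : Ω → ℝ) ω ≤
          l * (E.ι y₁ : Ω → ℝ) ω + (1 - l) * (E.ι y₂ : Ω → ℝ) ω := by
  
  intro u₁ u₂ l hl0 hl1 y₁ y₂ y₁₂ h1 h2 h12
  obtain ⟨L, hL⟩ := E.f_lip
  set yl : V := l • y₁ + (1 - l) • y₂ with hyl_def
  set w : V := y₁₂ - yl with hw_def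
  set φ : V := E.trunc 0 ⊤ w with hφ_def
  have hylK : yl ∈ E.K := E.K_convex h1.1 h2.1 hl0 (by linarith) (by ring)
  have hv0 : y₁₂ - φ ∈ E.K := E.K_min y₁₂ h12.1 yl hylK
  have hv1 : y₁ + φ ∈ E.K := E.K_plus_max y₁ h1.1 w
  have hv2 : y₂ + φ ∈ E.K := E.K_plus_max y₂ h2.1 w
  -- integrability facts
  have hmem : ∀ v : V, MemLp (E.ι v : Ω → ℝ) 2 μ := fun v =>
    (Lp.memLp (E.ι v)).mono_exponent hq
  have hfmem : ∀ v : V, MemLp (fun ω => E.f ((E.ι v : Ω → ℝ) ω)) 2 μ := by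
    intro v
    have h0 : LipschitzWith L (fun x => E.f x - E.f 0) := fun x y => by
      simpa [edist_sub_right] using hL x y
    have hadd := (h0.comp_memLp (by simp) (hmem v)).add
      (memLp_const (μ := μ) (E.f 0))
    have heq : ((fun x => E.f x - E.f 0) ∘ (fun ω => (E.ι v : Ω → ℝ) ω)
        + fun _ => E.f 0) = fun ω => E.f ((E.ι v : Ω → ℝ) ω) := by
      funext ω; simp [Function.comp]
    rwa [heq] at hadd
  have hint : ∀ v z : V,
      Integrable (fun ω => E.f ((E.ι v : Ω → ℝ) ω) * (E.ι z : Ω → ℝ) ω) μ :=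
    fun v z => integrable_mul_of_memL2 (hfmem v) (hmem z)
  -- the three VI inequalities
  have H1 := h1.2 _ hv1
  have H2 := h2.2 _ hv2
  have H0 := h12.2 _ hv0
  rw [add_sub_cancel_left] at H1 H2
  have e0 : y₁₂ - φ - y₁₂ = -φ := by abel
  rw [e0] at H0
  have hneg : (E.ι (-φ) : Ω → ℝ) =ᵐ[μ] fun ω => -((E.ι φ : Ω → ℝ) ω) := by
    rw [map_neg]; exact Lp.coeFn_neg (E.ι φ)
  have hInt0 : (∫ ω, E.f ((E.ι y₁₂ : Ω → ℝ) ω) * (E.ι (-φ) : Ω → ℝ) ω ∂μ)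
      = -∫ ω, E.f ((E.ι y₁₂ : Ω → ℝ) ω) * (E.ι φ : Ω → ℝ) ω ∂μ := by
    rw [← integral_neg]
    refine integral_congr_ae ?_
    filter_upwards [hneg] with ω hω
    rw [hω]; ring
  rw [hInt0, map_neg, map_neg] at H0
  have hu : ((l • u₁ + (1 - l) • u₂ : V →L[ℝ] ℝ)) φ = l * u₁ φ + (1 - l) * u₂ φ := by
    simp
  have hA : E.A yl φ = l * (E.A y₁ φ) + (1 - l) * (E.A y₂ φ) := by
    rw [hyl_def, map_add, ContinuousLinearMap.add_apply, _root_.map_smul, _root_.map_smul,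
      ContinuousLinearMap.smul_apply, ContinuousLinearMap.smul_apply, smul_eq_mul, smul_eq_mul]
  rw [hu] at H0
  -- combine
  have HH1 : 0 ≤ l * (E.A y₁ φ
      + (∫ ω, E.f ((E.ι y₁ : Ω → ℝ) ω) * (E.ι φ : Ω → ℝ) ω ∂μ) - u₁ φ) :=
    mul_nonneg hl0 H1
  have HH2 : 0 ≤ (1 - l) * (E.A y₂ φ
      + (∫ ω, E.f ((E.ι y₂ : Ω → ℝ) ω) * (E.ι φ : Ω → ℝ) ω ∂μ) - u₂ φ) :=
    mul_nonneg (by linarith) H2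
  have key : E.A y₁₂ φ - E.A yl φ
      ≤ l * (∫ ω, E.f ((E.ι y₁ : Ω → ℝ) ω) * (E.ι φ : Ω → ℝ) ω ∂μ)
        + (1 - l) * (∫ ω, E.f ((E.ι y₂ : Ω → ℝ) ω) * (E.ι φ : Ω → ℝ) ω ∂μ)
        - (∫ ω, E.f ((E.ι y₁₂ : Ω → ℝ) ω) * (E.ι φ : Ω → ℝ) ω ∂μ) := by
    linarith [HH1, HH2, H0, hA]
  -- pointwise a.e. descriptions
  have hφae : (E.ι φ : Ω → ℝ) =ᵐ[μ] fun ω => max 0 ((E.ι w : Ω → ℝ) ω) := by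
    refine (E.trunc_spec 0 ⊤ le_rfl le_top w).trans (Eventually.of_forall fun ω => ?_)
    show (min (⊤ : EReal) (max 0 _)).toReal = _
    rw [min_eq_right le_top, ← EReal.coe_zero,
      ← EReal.coe_strictMono.monotone.map_max, EReal.toReal_coe]
  have hwae : (E.ι w : Ω → ℝ) =ᵐ[μ] fun ω =>
      (E.ι y₁₂ : Ω → ℝ) ω - (l * (E.ι y₁ : Ω → ℝ) ω + (1 - l) * (E.ι y₂ : Ω → ℝ) ω) := by
    have hEq : E.ι w = E.ι y₁₂ - (l • E.ι y₁ + (1 - l) • E.ι y₂) := by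
      simp [hw_def, hyl_def, map_sub, map_add, _root_.map_smul]
    rw [hEq]
    filter_upwards [Lp.coeFn_sub (E.ι y₁₂) (l • E.ι y₁ + (1 - l) • E.ι y₂),
      Lp.coeFn_add (l • E.ι y₁) ((1 - l) • E.ι y₂),
      Lp.coeFn_smul l (E.ι y₁), Lp.coeFn_smul (1 - l) (E.ι y₂)] with ω e1 e2 e3 e4
    simp only [e1, Pi.sub_apply, e2, Pi.add_apply, e3, e4, Pi.smul_apply, smul_eq_mul]
  -- the Nemytskii term is nonpositive
  have i1 : Integrable (fun ω => l * (E.f ((E.ι y₁ : Ω → ℝ) ω) * (E.ι φ : Ω → ℝ) ω)) μ :=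
    (hint y₁ φ).const_mul l
  have i2 : Integrable (fun ω => (1 - l) * (E.f ((E.ι y₂ : Ω → ℝ) ω) * (E.ι φ : Ω → ℝ) ω)) μ :=
    (hint y₂ φ).const_mul (1 - l)
  have hcomb : l * (∫ ω, E.f ((E.ι y₁ : Ω → ℝ) ω) * (E.ι φ : Ω → ℝ) ω ∂μ)
      + (1 - l) * (∫ ω, E.f ((E.ι y₂ : Ω → ℝ) ω) * (E.ι φ : Ω → ℝ) ω ∂μ)
      - (∫ ω, E.f ((E.ι y₁₂ : Ω → ℝ) ω) * (E.ι φ : Ω → ℝ) ω ∂μ)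
      = ∫ ω, (l * (E.f ((E.ι y₁ : Ω → ℝ) ω) * (E.ι φ : Ω → ℝ) ω)
          + (1 - l) * (E.f ((E.ι y₂ : Ω → ℝ) ω) * (E.ι φ : Ω → ℝ) ω))
          - E.f ((E.ι y₁₂ : Ω → ℝ) ω) * (E.ι φ : Ω → ℝ) ω ∂μ := by
    have e1 : (∫ ω, (l * (E.f ((E.ι y₁ : Ω → ℝ) ω) * (E.ι φ : Ω → ℝ) ω)
          + (1 - l) * (E.f ((E.ι y₂ : Ω → ℝ) ω) * (E.ι φ : Ω → ℝ) ω))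
          - E.f ((E.ι y₁₂ : Ω → ℝ) ω) * (E.ι φ : Ω → ℝ) ω ∂μ)
        = (∫ ω, l * (E.f ((E.ι y₁ : Ω → ℝ) ω) * (E.ι φ : Ω → ℝ) ω)
          + (1 - l) * (E.f ((E.ι y₂ : Ω → ℝ) ω) * (E.ι φ : Ω → ℝ) ω) ∂μ)
          - (∫ ω, E.f ((E.ι y₁₂ : Ω → ℝ) ω) * (E.ι φ : Ω → ℝ) ω ∂μ) :=
      integral_sub (i1.add i2) (hint y₁₂ φ)
    have e2 : (∫ ω, l * (E.f ((E.ι y₁ : Ω → ℝ) ω) * (E.ι φ : Ω → ℝ) ω)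
          + (1 - l) * (E.f ((E.ι y₂ : Ω → ℝ) ω) * (E.ι φ : Ω → ℝ) ω) ∂μ)
        = (∫ ω, l * (E.f ((E.ι y₁ : Ω → ℝ) ω) * (E.ι φ : Ω → ℝ) ω) ∂μ)
          + ∫ ω, (1 - l) * (E.f ((E.ι y₂ : Ω → ℝ) ω) * (E.ι φ : Ω → ℝ) ω) ∂μ :=
      integral_add i1 i2
    have e3 : (∫ ω, l * (E.f ((E.ι y₁ : Ω → ℝ) ω) * (E.ι φ : Ω → ℝ) ω) ∂μ)
        = l * ∫ ω, E.f ((E.ι y₁ : Ω → ℝ) ω) * (E.ι φ : Ω → ℝ) ω ∂μ := integral_const_mul l _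
    have e4 : (∫ ω, (1 - l) * (E.f ((E.ι y₂ : Ω → ℝ) ω) * (E.ι φ : Ω → ℝ) ω) ∂μ)
        = (1 - l) * ∫ ω, E.f ((E.ι y₂ : Ω → ℝ) ω) * (E.ι φ : Ω → ℝ) ω ∂μ := integral_const_mul (1 - l) _
    rw [e1, e2, e3, e4]
  have hnonpos : ∀ᵐ ω ∂μ, (l * (E.f ((E.ι y₁ : Ω → ℝ) ω) * (E.ι φ : Ω → ℝ) ω)
      + (1 - l) * (E.f ((E.ι y₂ : Ω → ℝ) ω) * (E.ι φ : Ω → ℝ) ω))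
      - E.f ((E.ι y₁₂ : Ω → ℝ) ω) * (E.ι φ : Ω → ℝ) ω ≤ 0 := by
    filter_upwards [hφae, hwae] with ω eφ ew
    by_cases hc : (E.ι y₁₂ : Ω → ℝ) ω ≤ l * (E.ι y₁ : Ω → ℝ) ω
        + (1 - l) * (E.ι y₂ : Ω → ℝ) ω
    · have hz : (E.ι φ : Ω → ℝ) ω = 0 := by
        rw [eφ, ew]; exact max_eq_left (by linarith)
      rw [hz]; ring_nf; exact le_rfl
    · push_neg at hc
      have hφnn : 0 ≤ (E.ι φ : Ω → ℝ) ω := by rw [eφ]; exact le_max_left _ _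
      have hconc := E.f_concave.2 (Set.mem_univ ((E.ι y₁ : Ω → ℝ) ω))
        (Set.mem_univ ((E.ι y₂ : Ω → ℝ) ω)) hl0 (show (0:ℝ) ≤ 1 - l by linarith)
        (show l + (1 - l) = 1 by ring)
      simp only [smul_eq_mul] at hconc
      have hmono := E.f_mono hc.le
      have hfac : l * E.f ((E.ι y₁ : Ω → ℝ) ω) + (1 - l) * E.f ((E.ι y₂ : Ω → ℝ) ω)
          - E.f ((E.ι y₁₂ : Ω → ℝ) ω) ≤ 0 := by linarith
      have hprod := mul_nonpos_iff.mpr (Or.inr ⟨hfac, hφnn⟩)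
      linarith [hprod]
  have hIle : l * (∫ ω, E.f ((E.ι y₁ : Ω → ℝ) ω) * (E.ι φ : Ω → ℝ) ω ∂μ)
      + (1 - l) * (∫ ω, E.f ((E.ι y₂ : Ω → ℝ) ω) * (E.ι φ : Ω → ℝ) ω ∂μ)
      - (∫ ω, E.f ((E.ι y₁₂ : Ω → ℝ) ω) * (E.ι φ : Ω → ℝ) ω ∂μ) ≤ 0 := by
    rw [hcomb]; exact integral_nonpos_of_ae hnonpos
  -- conclude φ = 0
  have hAwφ : E.A w φ ≤ 0 := by
    have hAw : E.A w φ = E.A y₁₂ φ - E.A yl φ := by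
      rw [hw_def, map_sub, ContinuousLinearMap.sub_apply]
    linarith [key]
  have hmax := E.maxprop 0 ⊤ le_rfl le_top w
  have hco := E.coercive φ
  have hφ0 : φ = 0 := by
    have h1' : E.A φ φ ≤ E.A w φ := le_trans hmax (min_le_left _ _)
    have h2' : E.c * ‖φ‖ ^ 2 ≤ 0 := le_trans hco (le_trans h1' hAwφ)
    have h3' : ‖φ‖ ^ 2 ≤ 0 := by
      rw [show (0:ℝ) = E.c * 0 by ring] at h2'
      exact (mul_le_mul_iff_right₀ E.c_pos).mp h2'
    have h4' : ‖φ‖ ^ 2 = 0 := le_antisymm h3' (sq_nonneg _)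
    have h5' : ‖φ‖ = 0 := by
      exact (pow_eq_zero_iff two_ne_zero).mp h4'
    exact norm_eq_zero.mp h5'
  have hι0 : (E.ι φ : Ω → ℝ) =ᵐ[μ] 0 := by
    have : E.ι φ = 0 := by rw [hφ0, map_zero]
    rw [this]; exact Lp.coeFn_zero _ _ _
  filter_upwards [hφae, hwae, hι0] with ω eφ ew ez
  have hmax0 : max 0 ((E.ι y₁₂ : Ω → ℝ) ω - (l * (E.ι y₁ : Ω → ℝ) ω
      + (1 - l) * (E.ι y₂ : Ω → ℝ) ω)) = 0 := by
    rw [← ew, ← eφ]; exact ez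
  have ht := le_max_right (0 : ℝ) ((E.ι y₁₂ : Ω → ℝ) ω - (l * (E.ι y₁ : Ω → ℝ) ω
      + (1 - l) * (E.ι y₂ : Ω → ℝ) ω))
  rw [hmax0] at ht
  linarith
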